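/- If v is a leaf (degree-1 vertex) in a graph G and G − v has at least one edge, then φ(G) ≤ φ(G − v) + 2. -/

import Mathlib

/-- An overlap representation of `G`: vertices are adjacent iff their assigned
finite sets intersect and neither is contained in the other. -/
def IsOverlapRep {V : Type*} (G : SimpleGraph V) (f : V → Finset ℕ) : Prop :=
  ∀ u v : V, u ≠ v →
    (G.Adj u v ↔ ((f u ∩ f v).Nonempty ∧ ¬ f u ⊆ f v ∧ ¬ f v ⊆ f u))

/-- A pure overlap representation: adjacency iff intersection, and no assigned
set contains another. -/
def IsPureOverlapRep {V : Type*} (G : SimpleGraph V) (f : V → Finset ℕ) : Prop :=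
  (∀ u v : V, u ≠ v → (G.Adj u v ↔ (f u ∩ f v).Nonempty)) ∧
  (∀ u v : V, u ≠ v → ¬ f u ⊆ f v)

/-- The size of a representation: cardinality of the union of the assigned sets. -/
noncomputable def repSize {V : Type*} (f : V → Finset ℕ) : ℕ :=
  (⋃ v, (f v : Set ℕ)).ncard

/-- The overlap number of `G`. -/
noncomputable def overlapNumber {V : Type*} (G : SimpleGraph V) : ℕ :=
  sInf {n | ∃ f : V → Finset ℕ, IsOverlapRep G f ∧ repSize f = n}

/-- The pure overlap number of `G`. -/
noncomputable def pureOverlapNumber {V : Type*} (G : SimpleGraph V) : ℕ :=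
  sInf {n | ∃ f : V → Finset ℕ, IsPureOverlapRep G f ∧ repSize f = n}

/-!
Let `w` be the neighbour of the leaf `v` and take an optimal overlap representation `f` of `G - v`
with `f w ≠ ∅` (if `f w = ∅` then `w` is isolated in `G - v` and can be given a singleton of the
ground set, which overlaps nothing). Shift the ground set by two to free the points `0, 1`, give
`v` the set `{0, 1}`, add `0` to the set of `w`, and add both `0` and `1` to every other set that
contains `f w`. Then the set of `v` overlaps exactly that of `w`, and no other overlap changes.
-/

namespace Finset

variable {α : Type*} [DecidableEq α]

def Overlaps (s t : Finset α) : Prop :=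
  (s ∩ t).Nonempty ∧ ¬ s ⊆ t ∧ ¬ t ⊆ s

variable {s t s' t' : Finset α}

theorem overlaps_comm : Overlaps s t ↔ Overlaps t s := by
  simp only [Overlaps, inter_comm s t]
  tauto

theorem not_overlaps_singleton (a : α) (t : Finset α) : ¬ Overlaps {a} t := by
  rintro ⟨⟨b, hb⟩, hsub, -⟩
  rw [mem_inter, mem_singleton] at hb
  obtain ⟨rfl, hb⟩ := hb
  exact hsub (singleton_subset_iff.mpr hb)

theorem union_subset_union_iff_of_disjoint (h : Disjoint s t') (h' : Disjoint t s') :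
    s ∪ t ⊆ s' ∪ t' ↔ s ⊆ s' ∧ t ⊆ t' := by
  refine ⟨fun hsub => ⟨?_, ?_⟩, fun ⟨hs, ht⟩ => union_subset_union hs ht⟩
  · exact h.left_le_of_le_sup_right (subset_union_left.trans hsub)
  · exact h'.left_le_of_le_sup_left (subset_union_right.trans hsub)

theorem union_inter_union_of_disjoint (h : Disjoint s t') (h' : Disjoint t s') :
    (s ∪ t) ∩ (s' ∪ t') = s ∩ s' ∪ t ∩ t' := by
  rw [union_inter_distrib_right, inter_union_distrib_left, inter_union_distrib_left,
    disjoint_iff_inter_eq_empty.mp h, inter_comm t s', disjoint_iff_inter_eq_empty.mp h'.symm,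
    union_empty, empty_union]

theorem overlaps_union_union_iff (h : Disjoint s t') (h' : Disjoint t s') :
    Overlaps (s ∪ t) (s' ∪ t') ↔
      ((s ∩ s').Nonempty ∨ (t ∩ t').Nonempty) ∧ ¬ (s ⊆ s' ∧ t ⊆ t') ∧ ¬ (s' ⊆ s ∧ t' ⊆ t) := by
  rw [Overlaps, union_inter_union_of_disjoint h h', union_nonempty,
    union_subset_union_iff_of_disjoint h h', union_subset_union_iff_of_disjoint h'.symm h.symm]

end Finset

open Finset

def shiftTwo (A : Finset ℕ) : Finset ℕ :=
  A.map (addLeftEmbedding 2)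

theorem coe_shiftTwo (A : Finset ℕ) : (shiftTwo A : Set ℕ) = (2 + ·) '' A :=
  coe_map _ A

theorem disjoint_shiftTwo_of_subset {B : Finset ℕ} (A : Finset ℕ) (hB : B ⊆ {0, 1}) :
    Disjoint (shiftTwo A) B := by
  refine disjoint_left.mpr fun n hA hnB => ?_
  obtain ⟨a, -, rfl⟩ := mem_map.mp hA
  have := hB hnB
  simp only [addLeftEmbedding_apply, mem_insert, mem_singleton] at this
  omega

theorem overlaps_shiftTwo_union_iff {A A' B B' : Finset ℕ} (hB : B ⊆ {0, 1})
    (hB' : B' ⊆ {0, 1}) :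
    Overlaps (shiftTwo A ∪ B) (shiftTwo A' ∪ B') ↔
      ((A ∩ A').Nonempty ∨ (B ∩ B').Nonempty) ∧ ¬ (A ⊆ A' ∧ B ⊆ B') ∧ ¬ (A' ⊆ A ∧ B' ⊆ B) := by
  rw [overlaps_union_union_iff (disjoint_shiftTwo_of_subset A hB')
    (disjoint_shiftTwo_of_subset A' hB).symm]
  simp only [shiftTwo, ← map_inter, map_nonempty, map_subset_map]

section LeafLift

variable {ι : Type*} [DecidableEq ι] (f : ι → Finset ℕ) (w : ι)

def leafMark (x : ι) : Finset ℕ :=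
  if x = w then {0} else if f w ⊆ f x then {0, 1} else ∅

def leafLift (x : ι) : Finset ℕ :=
  shiftTwo (f x) ∪ leafMark f w x

theorem leafMark_subset (x : ι) : leafMark f w x ⊆ {0, 1} := by
  unfold leafMark
  split_ifs <;> simp

variable {f w}

theorem overlaps_leafLift_iff (hw : (f w).Nonempty) (x y : ι) :
    Overlaps (leafLift f w x) (leafLift f w y) ↔ Overlaps (f x) (f y) := by
  rw [leafLift, leafLift,
    overlaps_shiftTwo_union_iff (leafMark_subset f w x) (leafMark_subset f w y)]
  -- Two sets marked with `{0, 1}` both contain the nonempty `f w`, so the marks create no new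
  -- intersection; a set marked `{0, 1}` is never contained in an unmarked one by transitivity.
  have hmeet : f w ⊆ f x → f w ⊆ f y → (f x ∩ f y).Nonempty :=
    fun hx hy => hw.mono (subset_inter hx hy)
  unfold leafMark Overlaps
  split_ifs <;> subst_vars <;> grind [Finset.Subset.trans]

theorem overlaps_pair_leafLift_iff (hw : (f w).Nonempty) (x : ι) :
    Overlaps {0, 1} (leafLift f w x) ↔ x = w := by
  rw [show ({0, 1} : Finset ℕ) = shiftTwo ∅ ∪ {0, 1} by simp [shiftTwo], leafLift,
    overlaps_shiftTwo_union_iff subset_rfl (leafMark_subset f w x)]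
  unfold leafMark
  split_ifs <;> simp_all [hw.ne_empty]
  decide

end LeafLift

section OverlapRep

variable {V : Type*} {G : SimpleGraph V} {f : V → Finset ℕ}

theorem isOverlapRep_iff :
    IsOverlapRep G f ↔ ∀ u v, u ≠ v → (G.Adj u v ↔ Overlaps (f u) (f v)) :=
  Iff.rfl

theorem IsOverlapRep.induce (hf : IsOverlapRep G f) (s : Set V) :
    IsOverlapRep (G.induce s) (fun x => f x) :=
  fun x y hxy => hf x y (Subtype.coe_ne_coe.mpr hxy)

theorem IsOverlapRep.update_singleton [DecidableEq V] (hf : IsOverlapRep G f) {w : V}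
    (hw : ∀ u, ¬ G.Adj w u) (n : ℕ) : IsOverlapRep G (Function.update f w {n}) := by
  rw [isOverlapRep_iff] at hf ⊢
  intro x y hxy
  rcases eq_or_ne x w with rfl | hx
  · rw [Function.update_self, Function.update_of_ne hxy.symm]
    exact iff_of_false (hw y) (not_overlaps_singleton n _)
  rcases eq_or_ne y w with rfl | hy
  · rw [Function.update_self, Function.update_of_ne hx, G.adj_comm, overlaps_comm]
    exact iff_of_false (hw x) (not_overlaps_singleton n _)
  rw [Function.update_of_ne hx, Function.update_of_ne hy]
  exact hf x y hxy

theorem IsOverlapRep.exists_repSize_eq_nonempty (hf : IsOverlapRep G f)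
    (hG : G.edgeSet.Nonempty) (w : V) :
    ∃ f', IsOverlapRep G f' ∧ repSize f' = repSize f ∧ (f' w).Nonempty := by
  classical
  by_cases hfw : (f w).Nonempty
  · exact ⟨f, hf, rfl, hfw⟩
  rw [not_nonempty_iff_eq_empty] at hfw
  obtain ⟨e, he⟩ := hG
  induction e using Sym2.ind with | _ a b => ?_
  obtain ⟨n, hn⟩ := ((hf a b (G.ne_of_adj he)).mp he).1
  have hw : ∀ u, ¬ G.Adj w u := fun u hwu => by
    simpa [hfw] using (hf w u (G.ne_of_adj hwu)).mp hwu
  refine ⟨_, hf.update_singleton hw n, congrArg Set.ncard ?_, by simp⟩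
  apply Set.Subset.antisymm <;> refine Set.iUnion_subset fun x => ?_ <;>
    rcases eq_or_ne x w with rfl | hx
  · rw [Function.update_self, coe_singleton, Set.singleton_subset_iff]
    exact Set.mem_iUnion.mpr ⟨a, (mem_inter.mp hn).1⟩
  · rw [Function.update_of_ne hx]
    exact Set.subset_iUnion (fun x => (f x : Set ℕ)) x
  · simp [hfw]
  · rw [← Function.update_of_ne hx {n} f]
    exact Set.subset_iUnion (fun x => (Function.update f w {n} x : Set ℕ)) x

theorem overlapNumber_le_repSize (hf : IsOverlapRep G f) : overlapNumber G ≤ repSize f :=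
  Nat.sInf_le ⟨f, hf, rfl⟩

theorem exists_isOverlapRep_repSize_eq (h : ∃ f, IsOverlapRep G f) :
    ∃ f, IsOverlapRep G f ∧ repSize f = overlapNumber G := by
  obtain ⟨f, hf⟩ := h
  exact Nat.sInf_mem (s := {n | ∃ f, IsOverlapRep G f ∧ repSize f = n}) ⟨_, f, hf, rfl⟩

theorem overlapNumber_eq_zero_of_forall_not (h : ∀ f, ¬ IsOverlapRep G f) :
    overlapNumber G = 0 := by
  simp [overlapNumber, h]

end OverlapRep

section LeafExtension

variable {V : Type*} [DecidableEq V] {v : V}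

noncomputable def leafExtension (f : {u : V | u ≠ v} → Finset ℕ) (w : {u : V | u ≠ v}) :
    V → Finset ℕ :=
  Function.extend Subtype.val (leafLift f w) fun _ => {0, 1}

variable (f : {u : V | u ≠ v} → Finset ℕ) (w : {u : V | u ≠ v})

theorem leafExtension_self : leafExtension f w v = {0, 1} :=
  Function.extend_apply' _ _ _ fun ⟨x, hx⟩ => x.2 hx

theorem leafExtension_coe (x : {u : V | u ≠ v}) : leafExtension f w x = leafLift f w x :=
  Subtype.val_injective.extend_apply _ _ x

theorem isOverlapRep_leafExtension {G : SimpleGraph V}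
    (hf : IsOverlapRep (G.induce {u | u ≠ v}) f) (hw : (f w).Nonempty)
    (hvw : ∀ u, G.Adj v u ↔ u = w) : IsOverlapRep G (leafExtension f w) := by
  rw [isOverlapRep_iff] at hf ⊢
  have hv : ∀ x : {u : V | u ≠ v},
      G.Adj v ↑x ↔ Overlaps (leafExtension f w v) (leafExtension f w x) := fun x => by
    rw [leafExtension_self, leafExtension_coe, overlaps_pair_leafLift_iff hw, hvw, Subtype.coe_inj]
  intro a b hab
  rcases eq_or_ne v a with rfl | ha <;> rcases eq_or_ne v b with rfl | hb
  · exact absurd rfl hab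
  · exact hv ⟨b, hb.symm⟩
  · rw [G.adj_comm, overlaps_comm]
    exact hv ⟨a, ha.symm⟩
  · lift a to {u : V | u ≠ v} using ha.symm
    lift b to {u : V | u ≠ v} using hb.symm
    have hab' : a ≠ b := Subtype.coe_ne_coe.mp hab
    rw [leafExtension_coe, leafExtension_coe, overlaps_leafLift_iff hw a b, ← hf a b hab']
    rfl

theorem repSize_leafExtension_le : repSize (leafExtension f w) ≤ repSize f + 2 := by
  have hunion : (⋃ a, (leafExtension f w a : Set ℕ)) =
      {0, 1} ∪ (2 + ·) '' ⋃ x, (f x : Set ℕ) := by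
    apply Set.Subset.antisymm
    · refine Set.iUnion_subset fun a => ?_
      rcases eq_or_ne v a with rfl | ha
      · rw [leafExtension_self, coe_pair]
        exact Set.subset_union_left
      · lift a to {u : V | u ≠ v} using ha.symm
        rw [leafExtension_coe, leafLift, coe_union, coe_shiftTwo, Set.union_comm]
        refine Set.union_subset_union ?_
          (Set.image_mono (Set.subset_iUnion (fun x => (f x : Set ℕ)) a))
        rw [← coe_pair, coe_subset]
        exact leafMark_subset f w a
    · refine Set.union_subset ?_ (Set.image_iUnion.trans_subset (Set.iUnion_subset fun x => ?_))
      · rw [← coe_pair, ← leafExtension_self f w]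
        exact Set.subset_iUnion (fun a => (leafExtension f w a : Set ℕ)) v
      · refine subset_trans ?_ (Set.subset_iUnion (fun a => (leafExtension f w a : Set ℕ)) x)
        rw [leafExtension_coe, leafLift, coe_union, coe_shiftTwo]
        exact Set.subset_union_left
  -- `Set.ncard_union_le` needs no finiteness: for an infinite union both sides are junk `0`.
  calc repSize (leafExtension f w)
      ≤ ({0, 1} : Set ℕ).ncard + ((2 + ·) '' ⋃ x, (f x : Set ℕ)).ncard := by
        rw [repSize, hunion]
        exact Set.ncard_union_le _ _
    _ = repSize f + 2 := by
        rw [Set.ncard_pair zero_ne_one, Set.ncard_image_of_injective _ (add_right_injective 2),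
          repSize, add_comm]

end LeafExtension

theorem stmt_17 {V : Type*} (G : SimpleGraph V) (v : V)
    (hleaf : (G.neighborSet v).ncard = 1)
    (hedge : ((G.induce {u : V | u ≠ v}).edgeSet).Nonempty) :
    overlapNumber G ≤ overlapNumber (G.induce {u : V | u ≠ v}) + 2 := by
  classical
  obtain ⟨w, hw⟩ := Set.ncard_eq_one.mp hleaf
  have hvw : ∀ u, G.Adj v u ↔ u = w := fun u => Set.ext_iff.mp hw u
  have hwv : w ≠ v := ((hvw w).mpr rfl).ne'
  by_cases hrep : ∃ f, IsOverlapRep (G.induce {u | u ≠ v}) f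
  · obtain ⟨f, hf, hsize⟩ := exists_isOverlapRep_repSize_eq hrep
    obtain ⟨f', hf', hsize', hfw⟩ := hf.exists_repSize_eq_nonempty hedge ⟨w, hwv⟩
    calc overlapNumber G
        ≤ repSize (leafExtension f' ⟨w, hwv⟩) :=
          overlapNumber_le_repSize (isOverlapRep_leafExtension f' _ hf' hfw hvw)
      _ ≤ repSize f' + 2 := repSize_leafExtension_le f' _
      _ = overlapNumber (G.induce {u | u ≠ v}) + 2 := by rw [hsize', hsize]
  · -- Then `G` has no representation either, and both overlap numbers are `sInf ∅ = 0`.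
    rw [overlapNumber_eq_zero_of_forall_not fun g hg => hrep ⟨_, hg.induce _⟩]
    exact Nat.zero_le _
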